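/- arXiv:2002.09167 — 2 statements merged into one kernel-verified Lean document; each statement's English description precedes it below -/
import Mathlib

section
/- Let H be a complex Hilbert space and T a bounded linear operator on H that has a bounded inverse. Then T is minimaloid if and only if T⁻¹ is normaloid. -/
/-- The minimum modulus of `T`: `m(T) = inf {‖T x‖ : ‖x‖ = 1}`. -/
noncomputable def minModulus {H₁ H₂ : Type*} [NormedAddCommGroup H₁] [InnerProductSpace ℂ H₁]
    [NormedAddCommGroup H₂] [InnerProductSpace ℂ H₂] (T : H₁ →L[ℂ] H₂) : ℝ :=
  sInf {r : ℝ | ∃ x : H₁, ‖x‖ = 1 ∧ r = ‖T x‖}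

/-- `T` is minimaloid if `m(T) = inf {|λ| : λ ∈ σ(T)}`. -/
def Minimaloid {H : Type*} [NormedAddCommGroup H] [InnerProductSpace ℂ H] [CompleteSpace H]
    (T : H →L[ℂ] H) : Prop :=
  minModulus T = sInf {r : ℝ | ∃ z ∈ spectrum ℂ T, r = ‖z‖}

/-- `S` is normaloid if its norm equals its spectral radius
`r(S) = sup {|λ| : λ ∈ σ(S)}`. -/
def Normaloid {H : Type*} [NormedAddCommGroup H] [InnerProductSpace ℂ H] [CompleteSpace H]
    (S : H →L[ℂ] H) : Prop :=
  (‖S‖₊ : ENNReal) = spectralRadius ℂ S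

/-!
For an invertible `T`, the minimum modulus is `m(T) = ‖T⁻¹‖⁻¹`, and since `σ(T⁻¹) = σ(T)⁻¹` the
distance from `0` to `σ(T)` is `r(T⁻¹)⁻¹`. So `T` is minimaloid exactly when `‖T⁻¹‖ = r(T⁻¹)`.
On the zero space both identities still hold, with every infimum over an empty set equal to `0`.
-/

open scoped ENNReal

section MinModulus

variable {H₁ H₂ : Type*} [NormedAddCommGroup H₁] [InnerProductSpace ℂ H₁]
  [NormedAddCommGroup H₂] [InnerProductSpace ℂ H₂]

lemma minModulus_of_subsingleton [Subsingleton H₁] (T : H₁ →L[ℂ] H₂) : minModulus T = 0 := by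
  have hempty : {r : ℝ | ∃ x : H₁, ‖x‖ = 1 ∧ r = ‖T x‖} = ∅ := by
    ext r
    simp [norm_of_subsingleton]
  rw [minModulus, hempty, Real.sInf_empty]

lemma minModulus_mul_norm_le (T : H₁ →L[ℂ] H₂) (x : H₁) : minModulus T * ‖x‖ ≤ ‖T x‖ := by
  rcases eq_or_ne x 0 with rfl | hx
  · simp
  have hx' : 0 < ‖x‖ := norm_pos_iff.2 hx
  have hbdd : BddBelow {r : ℝ | ∃ x : H₁, ‖x‖ = 1 ∧ r = ‖T x‖} :=
    ⟨0, by rintro r ⟨y, -, rfl⟩; exact norm_nonneg _⟩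
  have hmem : ‖T x‖ / ‖x‖ ∈ {r : ℝ | ∃ x : H₁, ‖x‖ = 1 ∧ r = ‖T x‖} :=
    ⟨(‖x‖ : ℂ)⁻¹ • x, norm_smul_inv_norm hx, by simp [norm_smul, div_eq_inv_mul]⟩
  exact (le_div_iff₀ hx').1 (csInf_le hbdd hmem)

lemma le_minModulus [Nontrivial H₁] {T : H₁ →L[ℂ] H₂} {c : ℝ}
    (h : ∀ x, ‖x‖ = 1 → c ≤ ‖T x‖) : c ≤ minModulus T := by
  obtain ⟨x, hx⟩ := exists_ne (0 : H₁)
  refine le_csInf ⟨_, (‖x‖ : ℂ)⁻¹ • x, norm_smul_inv_norm hx, rfl⟩ ?_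
  rintro r ⟨y, hy, rfl⟩
  exact h y hy

theorem ContinuousLinearEquiv.minModulus_eq_inv_norm_symm (e : H₁ ≃L[ℂ] H₂) :
    minModulus (e : H₁ →L[ℂ] H₂) = ‖(e.symm : H₂ →L[ℂ] H₁)‖⁻¹ := by
  rcases subsingleton_or_nontrivial H₁ with _ | _
  · rw [minModulus_of_subsingleton, Subsingleton.elim (e.symm : H₂ →L[ℂ] H₁) 0, norm_zero,
      inv_zero]
  have hpos := e.norm_symm_pos
  have hlower : ‖(e.symm : H₂ →L[ℂ] H₁)‖⁻¹ ≤ minModulus (e : H₁ →L[ℂ] H₂) := by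
    refine le_minModulus fun x hx => (inv_le_iff_one_le_mul₀' hpos).2 ?_
    simpa [hx] using (e.symm : H₂ →L[ℂ] H₁).le_opNorm (e x)
  have hm : 0 < minModulus (e : H₁ →L[ℂ] H₂) := (inv_pos.2 hpos).trans_le hlower
  have hupper : ‖(e.symm : H₂ →L[ℂ] H₁)‖ ≤ (minModulus (e : H₁ →L[ℂ] H₂))⁻¹ := by
    refine ContinuousLinearMap.opNorm_le_bound _ (inv_nonneg.2 hm.le) fun y => ?_
    rw [le_inv_mul_iff₀ hm]
    simpa using minModulus_mul_norm_le (e : H₁ →L[ℂ] H₂) (e.symm y)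
  exact le_antisymm (le_inv_of_le_inv₀ hpos hupper) hlower

end MinModulus

lemma sInf_norm_eq_toReal_iInf {E : Type*} [SeminormedAddCommGroup E] (s : Set E) :
    sInf {r : ℝ | ∃ z ∈ s, r = ‖z‖} = (⨅ z ∈ s, (‖z‖₊ : ℝ≥0∞)).toReal := by
  rw [iInf_subtype', ENNReal.toReal_iInf fun _ => ENNReal.coe_ne_top, iInf]
  congr 1
  ext r
  simp [eq_comm]

lemma spectralRadius_units_inv {𝕜 A : Type*} [NormedField 𝕜] [Ring A] [Algebra 𝕜 A] (a : Aˣ) :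
    spectralRadius 𝕜 (↑a⁻¹ : A) = (⨅ z ∈ spectrum 𝕜 (a : A), (‖z‖₊ : ℝ≥0∞))⁻¹ := by
  rw [spectralRadius, ← spectrum.map_inv, ← Set.image_inv_eq_inv, iSup_image]
  simp_rw [ENNReal.inv_iInf]
  refine iSup_congr fun z => iSup_congr fun hz => ?_
  have hz0 : ‖z‖₊ ≠ 0 := nnnorm_ne_zero_iff.2 (spectrum.ne_zero_of_mem_of_unit hz)
  rw [nnnorm_inv, ENNReal.coe_inv hz0]

lemma spectrum.spectralRadius_ne_top {𝕜 A : Type*} [NormedField 𝕜] [NormedRing A]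
    [NormedAlgebra 𝕜 A] [CompleteSpace A] (a : A) : spectralRadius 𝕜 a ≠ ∞ :=
  ne_top_of_le_ne_top (ENNReal.coe_ne_top (r := ‖a‖₊ * ‖(1 : A)‖₊)) <| iSup₂_le fun _ hk => by
    exact_mod_cast spectrum.norm_le_norm_mul_of_mem hk

lemma normaloid_iff_norm_eq_toReal_spectralRadius {H : Type*} [NormedAddCommGroup H]
    [InnerProductSpace ℂ H] [CompleteSpace H] (S : H →L[ℂ] H) :
    Normaloid S ↔ ‖S‖ = (spectralRadius ℂ S).toReal := by
  rw [Normaloid, ← ENNReal.toReal_eq_toReal_iff' ENNReal.coe_ne_top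
    (spectrum.spectralRadius_ne_top S)]
  rfl

theorem minimaloid_iff_inverse_normaloid
    {H : Type*} [NormedAddCommGroup H] [InnerProductSpace ℂ H] [CompleteSpace H]
    (T : H →L[ℂ] H) (hT : IsUnit T) :
    Minimaloid T ↔ Normaloid (Ring.inverse T) := by
  obtain ⟨u, rfl⟩ := hT
  have hmin : minModulus (u : H →L[ℂ] H) = ‖(↑u⁻¹ : H →L[ℂ] H)‖⁻¹ :=
    (ContinuousLinearEquiv.unitsEquiv ℂ H u).minModulus_eq_inv_norm_symm
  rw [Minimaloid, hmin, sInf_norm_eq_toReal_iInf, ← inv_inv (⨅ z ∈ _, _),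
    ← spectralRadius_units_inv, ENNReal.toReal_inv, inv_inj, Ring.inverse_unit,
    normaloid_iff_norm_eq_toReal_spectralRadius]
end

section
/- Let H be a complex Hilbert space and T an absolutely minimum attaining bounded linear operator on H such that both T and its adjoint T* are injective. Then T is invertible (bijective with bounded inverse); equivalently, 0 does not belong to the spectrum of T. -/
/-- `T` is absolutely minimum attaining if for every nonzero closed subspace `M` of the domain,
there is a unit vector `x ∈ M` with `‖T x‖ = inf {‖T y‖ : y ∈ M, ‖y‖ = 1}`. -/
def AbsMinAttaining {H₁ H₂ : Type*} [NormedAddCommGroup H₁] [InnerProductSpace ℂ H₁]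
    [NormedAddCommGroup H₂] [InnerProductSpace ℂ H₂] (T : H₁ →L[ℂ] H₂) : Prop :=
  ∀ M : Submodule ℂ H₁, IsClosed (M : Set H₁) → M ≠ ⊥ →
    ∃ x, x ∈ M ∧ ‖x‖ = 1 ∧ ‖T x‖ = sInf {r : ℝ | ∃ y ∈ M, ‖y‖ = 1 ∧ r = ‖T y‖}

/-!
Applied to the whole space, absolute minimum attainment says that `‖T ·‖` attains its infimum
on the unit sphere; for injective `T` that minimum is positive, so `T` is bounded below and has
closed range. The orthogonal complement of the range is the kernel of `T†`, so injectivity of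
`T†` makes the range dense, hence all of `H`, and the open mapping theorem makes `T` a unit.
-/

open Metric

namespace AbsMinAttaining

variable {H₁ H₂ : Type*} [NormedAddCommGroup H₁] [InnerProductSpace ℂ H₁]
  [NormedAddCommGroup H₂] [InnerProductSpace ℂ H₂] {T : H₁ →L[ℂ] H₂}

theorem exists_isMinOn_sphere [Nontrivial H₁] (hT : AbsMinAttaining T) :
    ∃ x ∈ sphere (0 : H₁) 1, IsMinOn (fun y ↦ ‖T y‖) (sphere 0 1) x := by
  obtain ⟨x, -, hx, hTx⟩ := hT ⊤ isClosed_univ top_ne_bot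
  refine ⟨x, mem_sphere_zero_iff_norm.mpr hx, fun y hy ↦ ?_⟩
  change ‖T x‖ ≤ ‖T y‖
  rw [hTx]
  exact csInf_le ⟨0, by rintro _ ⟨z, -, -, rfl⟩; positivity⟩
    ⟨y, Submodule.mem_top, mem_sphere_zero_iff_norm.mp hy, rfl⟩

theorem exists_antilipschitzWith (hT : AbsMinAttaining T) (hinj : Function.Injective T) :
    ∃ K, AntilipschitzWith K T := by
  rcases subsingleton_or_nontrivial H₁ with _ | _
  · exact ⟨0, .of_subsingleton⟩
  obtain ⟨x, hx, hmin⟩ := hT.exists_isMinOn_sphere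
  have hTx : 0 < ‖T x‖ :=
    norm_pos_iff.mpr <| (map_ne_zero_iff T hinj).mpr <| ne_zero_of_mem_unit_sphere ⟨x, hx⟩
  refine ⟨‖T x‖₊⁻¹, antilipschitz_of_bound_of_norm_one T fun y hy ↦ ?_⟩
  rw [NNReal.coe_inv, coe_nnnorm, inv_mul_eq_div, one_le_div hTx]
  exact hmin (mem_sphere_zero_iff_norm.mpr hy)

end AbsMinAttaining

theorem ContinuousLinearMap.isUnit_of_antilipschitzWith_of_injective_adjoint {𝕜 H : Type*}
    [RCLike 𝕜] [NormedAddCommGroup H] [InnerProductSpace 𝕜 H] [CompleteSpace H]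
    {T : H →L[𝕜] H} {K : NNReal} (hT : AntilipschitzWith K T)
    (hinj : Function.Injective (adjoint T)) : IsUnit T := by
  rw [isUnit_iff_bijective, bijective_iff_dense_range_and_antilipschitz,
    Submodule.topologicalClosure_eq_top_iff, orthogonal_range]
  exact ⟨LinearMap.ker_eq_bot_of_injective hinj, K, hT⟩

theorem absMinAttaining_injective_adjoint_injective_isUnit
    {H : Type*} [NormedAddCommGroup H] [InnerProductSpace ℂ H] [CompleteSpace H]
    (T : H →L[ℂ] H) (hT : AbsMinAttaining T)
    (hinj : Function.Injective T)
    (hinj' : Function.Injective (ContinuousLinearMap.adjoint T)) :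
    IsUnit T ∧ (0 : ℂ) ∉ spectrum ℂ T := by
  obtain ⟨K, hK⟩ := hT.exists_antilipschitzWith hinj
  have hunit : IsUnit T := T.isUnit_of_antilipschitzWith_of_injective_adjoint hK hinj'
  exact ⟨hunit, spectrum.zero_notMem ℂ hunit⟩
end
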